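/- arXiv:math/0509574 — 3 statements merged into one kernel-verified Lean document; each statement's English description precedes it below -/
import Mathlib

section
/- Let Λ be a compact metric space and F a subgroup of the group of self-homeomorphisms of Λ. Suppose that for some fixed n, every finitely generated subgroup F₀ of F has a subgroup of index at most n with a global fixed point (a point fixed by every element of that subgroup). Then F itself has a subgroup of index at most n with a global fixed point. -/
/-!
Let `L_s` be the subgroup generated by a finite set `s ⊆ F`, and choose `K_s ≤ L_s` of index at
most `n` fixing a point `x_s`. Along an ultrafilter `U` on finite subsets of `F` refining `atTop`,
the elements of `F` that lie in `K_s` for `U`-almost all `s` form a subgroup `H`. By compactness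
`x_s` converges along `U` to some `y`, and `y` is fixed by `H` by continuity. Given `n + 1`
elements of `F`, for `U`-almost all `s` they lie in `L_s`, so two of them are in the same left
coset of `K_s`; as there are finitely many pairs, one pair works for `U`-almost all `s`, hence
lies in the same coset of `H`. So `H` has index at most `n` in `F`.
-/

/-- The group of self-homeomorphisms of a topological space, under composition. -/
instance homeoGroup (Λ : Type*) [TopologicalSpace Λ] : Group (Λ ≃ₜ Λ) where
  mul f g := g.trans f
  one := Homeomorph.refl Λ
  inv := Homeomorph.symm
  mul_assoc f g h := Homeomorph.ext fun _ => rfl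
  one_mul f := Homeomorph.ext fun _ => rfl
  mul_one f := Homeomorph.ext fun _ => rfl
  inv_mul_cancel f := Homeomorph.ext fun x => f.symm_apply_apply x

open Filter Topology

theorem finite_and_natCard_le_iff_forall_not_injective {α : Type*} {n : ℕ} :
    Finite α ∧ Nat.card α ≤ n ↔ ∀ f : Fin (n + 1) → α, ¬ Function.Injective f := by
  refine ⟨fun ⟨_, hn⟩ f hf => ?_, fun h => ?_⟩
  · have := Nat.card_le_card_of_injective f hf
    rw [Nat.card_fin] at this
    omega
  · have : Finite α := by
      by_contra hα
      rw [not_finite_iff_infinite] at hα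
      exact h _ ((Infinite.natEmbedding α).injective.comp Fin.val_injective)
    exact ⟨this, not_lt.1 fun hn =>
      h _ ((Finite.equivFin α).symm.injective.comp (Fin.castLE_injective hn))⟩

theorem Function.IsFixedPt.of_tendsto {X ι : Type*} [TopologicalSpace X] [T2Space X]
    {l : Filter ι} [l.NeBot] {f : X → X} (hf : Continuous f) {x : ι → X} {y : X}
    (hx : Tendsto x l (𝓝 y)) (hfx : ∀ᶠ i in l, Function.IsFixedPt f (x i)) :
    Function.IsFixedPt f y :=
  tendsto_nhds_unique ((hf.tendsto y).comp hx) (hx.congr' (hfx.mono fun _ hi => hi.symm))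

namespace Subgroup

variable {G ι : Type*} [Group G]

theorem relIndex_ne_zero_and_le_iff {H K : Subgroup G} {n : ℕ} :
    H.relIndex K ≠ 0 ∧ H.relIndex K ≤ n ↔
      ∀ f : Fin (n + 1) → K, ∃ k l, (f k : G)⁻¹ * f l ∈ H ∧ k ≠ l := by
  rw [relIndex, index_eq_card, Nat.card_ne_zero, and_assoc,
    and_iff_right (inferInstance : Nonempty (K ⧸ H.subgroupOf K)),
    finite_and_natCard_le_iff_forall_not_injective,
    (QuotientGroup.mk_surjective.comp_left (α := Fin (n + 1))).forall]
  simp only [Function.not_injective_iff, Function.comp_apply, QuotientGroup.eq, mem_subgroupOf,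
    coe_mul, coe_inv]

def liminf (l : Filter ι) (K : ι → Subgroup G) : Subgroup G where
  carrier := {g | ∀ᶠ i in l, g ∈ K i}
  one_mem' := .of_forall fun i => (K i).one_mem
  mul_mem' ha hb := (ha.and hb).mono fun i hi => (K i).mul_mem hi.1 hi.2
  inv_mem' ha := ha.mono fun i => (K i).inv_mem

variable {l : Filter ι} {K : ι → Subgroup G}

theorem liminf_le [l.NeBot] {F : Subgroup G} (h : ∀ᶠ i in l, K i ≤ F) : liminf l K ≤ F :=
  fun _ hg => (hg.and h).exists.elim fun _ hi => hi.2 hi.1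

theorem relIndex_liminf_ne_zero_and_le (U : Ultrafilter ι) {K L : ι → Subgroup G}
    {F : Subgroup G} {n : ℕ} (hL : ∀ g ∈ F, ∀ᶠ i in U, g ∈ L i)
    (hK : ∀ᶠ i in U, (K i).relIndex (L i) ≠ 0 ∧ (K i).relIndex (L i) ≤ n) :
    (liminf U K).relIndex F ≠ 0 ∧ (liminf U K).relIndex F ≤ n := by
  refine relIndex_ne_zero_and_le_iff.2 fun f => ?_
  have hfL : ∀ᶠ i in U, ∀ k, (f k : G) ∈ L i := eventually_all.2 fun k => hL _ (f k).2
  have hpair : ∀ᶠ i in U, ∃ p : Fin (n + 1) × Fin (n + 1),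
      (f p.1 : G)⁻¹ * f p.2 ∈ K i ∧ p.1 ≠ p.2 := by
    filter_upwards [hfL, hK] with i hfi hKi
    obtain ⟨k, l, hkl⟩ := relIndex_ne_zero_and_le_iff.1 hKi fun k => ⟨f k, hfi k⟩
    exact ⟨(k, l), hkl⟩
  obtain ⟨⟨k, l⟩, hkl⟩ := Ultrafilter.eventually_exists_iff.1 hpair
  exact ⟨k, l, hkl.mono fun _ => And.left, hkl.exists.choose_spec.2⟩

end Subgroup

/-- If every finitely generated subgroup of a group `F` of homeomorphisms of a compact
metric space has a subgroup of index at most `n` with a global fixed point, then `F`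
itself has a subgroup of index at most `n` with a global fixed point. -/
theorem stmt0 {Λ : Type*} [MetricSpace Λ] [CompactSpace Λ]
    (F : Subgroup (Λ ≃ₜ Λ)) (n : ℕ)
    (h : ∀ F₀ : Subgroup (Λ ≃ₜ Λ), F₀ ≤ F → F₀.FG →
      ∃ H : Subgroup (Λ ≃ₜ Λ), H ≤ F₀ ∧ H.relIndex F₀ ≠ 0 ∧ H.relIndex F₀ ≤ n ∧
        ∃ x : Λ, ∀ g ∈ H, g x = x) :
    ∃ H : Subgroup (Λ ≃ₜ Λ), H ≤ F ∧ H.relIndex F ≠ 0 ∧ H.relIndex F ≤ n ∧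
      ∃ x : Λ, ∀ g ∈ H, g x = x := by
  let L (s : Finset F) : Subgroup (Λ ≃ₜ Λ) := Subgroup.closure ((↑) '' (s : Set F))
  have hLF (s : Finset F) : L s ≤ F :=
    (Subgroup.closure_le _).2 (by rintro _ ⟨g, -, rfl⟩; exact g.2)
  choose K hKL hK0 hKn x hx using fun s =>
    h (L s) (hLF s) ((Subgroup.fg_iff _).2 ⟨_, rfl, s.finite_toSet.image _⟩)
  let U := Ultrafilter.of (atTop : Filter (Finset F))
  have hL : ∀ g ∈ F, ∀ᶠ s in U, g ∈ L s := fun g hg => Ultrafilter.of_le _ <|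
    (eventually_ge_atTop {⟨g, hg⟩}).mono fun s hs =>
      Subgroup.subset_closure ⟨_, hs (Finset.mem_singleton_self _), rfl⟩
  obtain ⟨y, -, hy⟩ := isCompact_univ.ultrafilter_le_nhds (U.map x) (by simp)
  obtain ⟨hH0, hHn⟩ :=
    Subgroup.relIndex_liminf_ne_zero_and_le U hL (.of_forall fun s => ⟨hK0 s, hKn s⟩)
  have hHF : Subgroup.liminf (U : Filter (Finset F)) K ≤ F :=
    Subgroup.liminf_le (.of_forall fun s => (hKL s).trans (hLF s))
  refine ⟨_, hHF, hH0, hHn, y, fun g hg => ?_⟩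
  exact Function.IsFixedPt.of_tendsto g.continuous hy (hg.mono fun s hs => hx s g hs)
end

section
/- Let G be an abelian group of orientation-preserving homeomorphisms of the circle S¹. If every element g ∈ G has a fixed point on S¹, then G has a global fixed point, i.e. there is a point x ∈ S¹ with g(x) = x for all g ∈ G. -/
/-- A homeomorphism of the circle `S¹ = ℝ/ℤ` is orientation preserving if it lifts to a
strictly increasing continuous map of `ℝ` commuting with unit translation. -/
def OrientationPreserving (f : AddCircle (1 : ℝ) ≃ₜ AddCircle (1 : ℝ)) : Prop :=
  ∃ F : ℝ → ℝ, Continuous F ∧ StrictMono F ∧ (∀ x : ℝ, F (x + 1) = F x + 1) ∧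
    ∀ x : ℝ, f (x : AddCircle (1 : ℝ)) = ((F x : ℝ) : AddCircle (1 : ℝ))

open Function Set Filter

theorem Monotone.exists_isFixedPt_mem_of_le_map {α : Type*} [ConditionallyCompleteLinearOrder α]
    [TopologicalSpace α] [OrderTopology α] {f : α → α} (hf : Monotone f) (hfc : Continuous f)
    {K : Set α} (hK : IsClosed K) (hKf : MapsTo f K K) {x b : α} (hx : x ∈ K) (hxf : x ≤ f x)
    (hxb : x ≤ b) (hb : f b ≤ b) : ∃ y ∈ K, IsFixedPt f y := by
  have hbdd : ∀ n, f^[n] x ≤ b := fun n => by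
    induction n with
    | zero => exact hxb
    | succ n ih => rw [iterate_succ_apply']; exact (hf ih).trans hb
  have hlim := tendsto_atTop_ciSup (hf.monotone_iterate_of_le_map hxf) ⟨b, forall_mem_range.2 hbdd⟩
  exact ⟨_, hK.mem_of_tendsto hlim (Eventually.of_forall fun n => hKf.iterate n hx),
    isFixedPt_of_tendsto_iterate hlim hfc.continuousAt⟩

theorem Monotone.exists_isFixedPt_mem_of_map_le {α : Type*} [ConditionallyCompleteLinearOrder α]
    [TopologicalSpace α] [OrderTopology α] {f : α → α} (hf : Monotone f) (hfc : Continuous f)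
    {K : Set α} (hK : IsClosed K) (hKf : MapsTo f K K) {x b : α} (hx : x ∈ K) (hfx : f x ≤ x)
    (hbx : b ≤ x) (hb : b ≤ f b) : ∃ y ∈ K, IsFixedPt f y :=
  hf.dual.exists_isFixedPt_mem_of_le_map (α := αᵒᵈ) hfc hK hKf hx hfx hbx hb

theorem CircleDeg1Lift.exists_isFixedPt_mem (F : CircleDeg1Lift) (hF : Continuous F) {p : ℝ}
    (hp : IsFixedPt F p) {K : Set ℝ} (hK : IsClosed K) (hKF : MapsTo F K K) (hne : K.Nonempty) :
    ∃ y ∈ K, IsFixedPt F y := by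
  obtain ⟨x, hx⟩ := hne
  have hpn : ∀ n : ℤ, IsFixedPt F (p + n) := fun n => by rw [IsFixedPt, F.map_add_int, hp.eq]
  rcases le_total x (F x) with hxF | hFx
  · exact F.monotone.exists_isFixedPt_mem_of_le_map hF hK hKF hx hxF
      (by linarith [Int.le_ceil (x - p)]) (hpn ⌈x - p⌉).le
  · exact F.monotone.exists_isFixedPt_mem_of_map_le hF hK hKF hx hFx
      (by linarith [Int.floor_le (x - p)]) (hpn ⌊x - p⌋).ge

theorem OrientationPreserving.exists_lift_isFixedPt {f : AddCircle (1 : ℝ) ≃ₜ AddCircle (1 : ℝ)}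
    (hf : OrientationPreserving f) (hfix : ∃ x, f x = x) :
    ∃ F : CircleDeg1Lift, Continuous F ∧ Semiconj ((↑) : ℝ → AddCircle (1 : ℝ)) F f ∧
      ∃ p, IsFixedPt F p := by
  obtain ⟨F, hFc, hFm, hF1, hFf⟩ := hf
  obtain ⟨x, hx⟩ := hfix
  obtain ⟨x, rfl⟩ := QuotientAddGroup.mk_surjective x
  obtain ⟨n, hn⟩ : ∃ n : ℤ, n • (1 : ℝ) = F x - x := by
    rw [← AddCircle.coe_eq_zero_iff, AddCircle.coe_sub, ← hFf, hx, sub_self]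
  refine ⟨⟨⟨fun y => F y - n, hFm.monotone.add_const _⟩, fun y => by simp only [hF1]; ring⟩,
    hFc.sub continuous_const, fun y => ?_, x, ?_⟩
  · simp [← hFf]
  · show F x - n = x
    linarith [hn.symm.trans (zsmul_one n)]

theorem OrientationPreserving.exists_isFixedPt_mem {f : AddCircle (1 : ℝ) ≃ₜ AddCircle (1 : ℝ)}
    (hf : OrientationPreserving f) (hfix : ∃ x, f x = x) {C : Set (AddCircle (1 : ℝ))}
    (hC : IsClosed C) (hCf : MapsTo f C C) (hne : C.Nonempty) : ∃ x ∈ C, IsFixedPt f x := by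
  obtain ⟨F, hFc, hFf, p, hp⟩ := hf.exists_lift_isFixedPt hfix
  obtain ⟨y, hy, hFy⟩ := F.exists_isFixedPt_mem hFc hp (hC.preimage (AddCircle.continuous_mk' 1))
    (fun y hy => by simpa [hFf y] using hCf hy)
    (hne.preimage QuotientAddGroup.mk_surjective)
  exact ⟨y, hy, hFy.map hFf⟩

theorem exists_forall_isFixedPt_of_commute {X ι : Type*} [TopologicalSpace X] [T2Space X]
    [CompactSpace X] [Nonempty X] {f : ι → X → X} (hfc : ∀ i, Continuous (f i))
    (hcomm : ∀ i j, Function.Commute (f i) (f j))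
    (hfix : ∀ i {C : Set X}, IsClosed C → MapsTo (f i) C C → C.Nonempty →
      ∃ x ∈ C, IsFixedPt (f i) x) :
    ∃ x, ∀ i, IsFixedPt (f i) x := by
  have hclosed i : IsClosed (fixedPoints (f i)) := isClosed_fixedPoints (hfc i)
  have hfin (u : Finset ι) : (⋂ i ∈ u, fixedPoints (f i)).Nonempty := by
    classical
    induction u using Finset.induction_on with
    | empty => simp
    | insert i u _ ih =>
      obtain ⟨x, hx, hfx⟩ := hfix i (isClosed_biInter fun j _ => hclosed j)
        (mapsTo_iInter₂_iInter₂ fun j _ => (hcomm i j).mapsTo_fixedPoints) ih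
      rw [Finset.set_biInter_insert]
      exact ⟨x, hfx, hx⟩
  simpa using CompactSpace.iInter_nonempty hclosed hfin

/-- An abelian group of orientation-preserving homeomorphisms of the circle, each element
of which has a fixed point, has a global fixed point. -/
theorem stmt5 (G : Subgroup (AddCircle (1 : ℝ) ≃ₜ AddCircle (1 : ℝ)))
    (hcomm : ∀ f ∈ G, ∀ g ∈ G, f * g = g * f)
    (hori : ∀ f ∈ G, OrientationPreserving f)
    (hfix : ∀ f ∈ G, ∃ x : AddCircle (1 : ℝ), f x = x) :
    ∃ x : AddCircle (1 : ℝ), ∀ f ∈ G, f x = x := by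
  obtain ⟨x, hx⟩ := exists_forall_isFixedPt_of_commute
    (f := fun g : G => ⇑(g : AddCircle (1 : ℝ) ≃ₜ AddCircle (1 : ℝ))) (fun g => g.1.continuous)
    (fun g h => DFunLike.congr_fun (hcomm g g.2 h h.2))
    (fun g _ hC hCg hne => (hori g g.2).exists_isFixedPt_mem (hfix g g.2) hC hCg hne)
  exact ⟨x, fun f hf => hx ⟨f, hf⟩⟩
end

section
/- Let α : [0,1] → GL(2,ℝ) be a loop with α(0) = α(1) = I. Suppose there exists a nonzero vector x ∈ ℝ² such that the loop t ↦ α(t)·x is null-homotopic in ℝ² \ {0}. Then α is null-homotopic in GL(2,ℝ). -/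
/-!
Let `s : ℝ² ∖ {0} → GL(2,ℝ)` be multiplication by the complex number `v / x`, so that `s v` sends
`x` to `v` and `s x = 1`. Since `α t` and `s (β t)` agree on `x`, their difference is singular, and
then the determinant is affine on the segment between them; both endpoints have positive
determinant (loops at `1`), so the straight-line homotopy from `α` to `s ∘ β` stays in `GL(2,ℝ)`.
Finally `s ∘ β` is null-homotopic because `β` is.
-/

open Matrix unitInterval

section

variable {n X : Type*} [Fintype n] [DecidableEq n] [TopologicalSpace X]

theorem Continuous.mkOfDetNeZero {K : Type*} [Field K] [TopologicalSpace K]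
    [IsTopologicalDivisionRing K] {f : X → Matrix n n K} (hf : Continuous f)
    (hdet : ∀ p, (f p).det ≠ 0) :
    Continuous fun p => GeneralLinearGroup.mkOfDetNeZero (f p) (hdet p) :=
  Units.continuous_iff.2 ⟨hf, (hf.matrix_det.inv₀ hdet).smul hf.matrix_adjugate⟩

theorem det_pos_of_path_one {g : GL n ℝ} (γ : Path 1 g) (t : I) :
    0 < (γ t : Matrix n n ℝ).det := by
  have hcont : Continuous fun s => (γ s : Matrix n n ℝ).det :=
    (Units.continuous_val.comp γ.continuous).matrix_det
  have hne : ∀ s, (γ s : Matrix n n ℝ).det ≠ 0 := fun s =>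
    ((γ s).isUnit.map detMonoidHom).ne_zero
  by_contra! hle
  obtain ⟨s, hs⟩ := intermediate_value_univ t 0 hcont ⟨(hle.lt_of_ne (hne t)).le, by simp⟩
  exact hne s hs

end

theorem det_one_sub_smul_add_smul_of_det_sub_eq_zero {R : Type*} [CommRing R]
    {M A : Matrix (Fin 2) (Fin 2) R} (h : (A - M).det = 0) (s : R) :
    ((1 - s) • M + s • A).det = (1 - s) * M.det + s * A.det := by
  simp only [det_fin_two, Matrix.sub_apply, Matrix.add_apply, Matrix.smul_apply,
    smul_eq_mul] at h ⊢
  linear_combination (s ^ 2 - s) * h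

theorem Path.Homotopic.of_det_pos_of_mulVec_eq {g h : GL (Fin 2) ℝ} {α γ : Path g h}
    (hα : ∀ t, 0 < (α t : Matrix (Fin 2) (Fin 2) ℝ).det)
    (hγ : ∀ t, 0 < (γ t : Matrix (Fin 2) (Fin 2) ℝ).det) {x : Fin 2 → ℝ} (hx : x ≠ 0)
    (hαγ : ∀ t, (α t : Matrix (Fin 2) (Fin 2) ℝ) *ᵥ x = (γ t : Matrix (Fin 2) (Fin 2) ℝ) *ᵥ x) :
    α.Homotopic γ := by
  let N : I × I → Matrix (Fin 2) (Fin 2) ℝ := fun p =>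
    (1 - (p.1 : ℝ)) • (α p.2 : Matrix (Fin 2) (Fin 2) ℝ) + (p.1 : ℝ) • (γ p.2 : Matrix _ _ ℝ)
  have hN : ∀ p, 0 < (N p).det := by
    rintro ⟨s, t⟩
    have hsing : ((γ t : Matrix (Fin 2) (Fin 2) ℝ) - α t).det = 0 :=
      exists_mulVec_eq_zero_iff.1 ⟨x, hx, by rw [sub_mulVec, hαγ, sub_self]⟩
    dsimp only [N]
    rw [det_one_sub_smul_add_smul_of_det_sub_eq_zero hsing]
    exact convex_Ioi (0 : ℝ) (hα t) (hγ t) (sub_nonneg.2 s.2.2) s.2.1 (sub_add_cancel 1 _)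
  have hNc : Continuous N := by fun_prop
  refine ⟨{ toFun := fun p => GeneralLinearGroup.mkOfDetNeZero (N p) (hN p).ne'
            continuous_toFun := hNc.mkOfDetNeZero _
            map_zero_left := fun t => Units.ext (by simp [N])
            map_one_left := fun t => Units.ext (by simp [N])
            prop' := ?_ }⟩
  rintro s t (rfl | rfl) <;> exact Units.ext (by simp [N, ← add_smul])

theorem sq_add_sq_ne_zero_of_ne_zero {v : Fin 2 → ℝ} (hv : v ≠ 0) : v 0 ^ 2 + v 1 ^ 2 ≠ 0 := by
  contrapose! hv
  have h0 : v 0 = 0 := by nlinarith [sq_nonneg (v 0), sq_nonneg (v 1)]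
  have h1 : v 1 = 0 := by nlinarith [sq_nonneg (v 0), sq_nonneg (v 1)]
  ext i
  fin_cases i <;> assumption

noncomputable def conformalGL (v : {y : Fin 2 → ℝ // y ≠ 0}) : GL (Fin 2) ℝ :=
  planeConformalMatrix (v.1 0) (v.1 1) (sq_add_sq_ne_zero_of_ne_zero v.2)

theorem continuous_conformalGL : Continuous conformalGL :=
  Continuous.mkOfDetNeZero
    ((by fun_prop : Continuous fun v : Fin 2 → ℝ => !![v 0, -v 1; v 1, v 0]).comp
      continuous_subtype_val) _

theorem conformalGL_mulVec_single (v : {y : Fin 2 → ℝ // y ≠ 0}) :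
    (conformalGL v : Matrix (Fin 2) (Fin 2) ℝ) *ᵥ Pi.single 0 1 = v := by
  ext i
  fin_cases i <;> simp [conformalGL]

noncomputable def evalSection (x : {y : Fin 2 → ℝ // y ≠ 0}) :
    C({y : Fin 2 → ℝ // y ≠ 0}, GL (Fin 2) ℝ) where
  toFun v := conformalGL v * (conformalGL x)⁻¹
  continuous_toFun := continuous_conformalGL.mul continuous_const

theorem evalSection_self (x : {y : Fin 2 → ℝ // y ≠ 0}) : evalSection x x = 1 :=
  mul_inv_cancel _

theorem evalSection_mulVec (x v : {y : Fin 2 → ℝ // y ≠ 0}) :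
    (evalSection x v : Matrix (Fin 2) (Fin 2) ℝ) *ᵥ x = v := by
  rw [← conformalGL_mulVec_single x]
  simp only [evalSection, ContinuousMap.coe_mk, Units.val_mul, mulVec_mulVec]
  rw [Matrix.mul_assoc, Units.inv_mul, Matrix.mul_one, conformalGL_mulVec_single]

open Matrix in
/-- If a loop `α` in `GL(2,ℝ)` based at the identity evaluates at some nonzero vector
`x ∈ ℝ²` to a loop that is null-homotopic in `ℝ² \ {0}`, then `α` is null-homotopic
in `GL(2,ℝ)`. -/
theorem stmt7 (α : Path (1 : GL (Fin 2) ℝ) (1 : GL (Fin 2) ℝ))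
    (x : Fin 2 → ℝ) (hx : x ≠ 0)
    (β : Path (⟨x, hx⟩ : {y : Fin 2 → ℝ // y ≠ 0}) (⟨x, hx⟩ : {y : Fin 2 → ℝ // y ≠ 0}))
    (hβ : ∀ t : unitInterval, (β t : Fin 2 → ℝ) =
      Matrix.mulVec ((α t : Matrix (Fin 2) (Fin 2) ℝ)) x)
    (hnull : β.Homotopic (Path.refl (⟨x, hx⟩ : {y : Fin 2 → ℝ // y ≠ 0}))) :
    α.Homotopic (Path.refl (1 : GL (Fin 2) ℝ)) := by
  let s := evalSection ⟨x, hx⟩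
  have hs : s ⟨x, hx⟩ = 1 := evalSection_self _
  let γ : Path (1 : GL (Fin 2) ℝ) 1 := (β.map s.continuous).cast hs.symm hs.symm
  have hαγ : α.Homotopic γ :=
    .of_det_pos_of_mulVec_eq (det_pos_of_path_one α) (det_pos_of_path_one γ) hx fun t => by
      rw [← hβ]
      exact (evalSection_mulVec ⟨x, hx⟩ (β t)).symm
  have hγ : γ.Homotopic (Path.refl 1) := by
    convert (hnull.map s).pathCast hs.symm hs.symm
    ext t
    simp [hs]
  exact hαγ.trans hγ
end
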